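/- Let ∂S(H) be the set of rank-one orthogonal projections on a complex Hilbert space H. The initial topology 𝒯₀ generated by the transition-probability functions h_Q(P) = tr(PQ), Q ∈ ∂S(H), coincides with the metric topology induced by the operator norm: 𝒯₀ = 𝒯_n. -/

import Mathlib

open scoped InnerProductSpace
open Metric

/-- The rank-one operator `χ ↦ ⟪φ, χ⟫ • φ` (orthogonal projection onto `ℂ φ` when `‖φ‖ = 1`). -/
noncomputable def proj (H : Type) [NormedAddCommGroup H] [InnerProductSpace ℂ H] (φ : H) :
    H →L[ℂ] H := (innerSL ℂ φ).smulRight φ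

/-- Equivalence of unit vectors up to a phase factor. -/
def phaseSetoid (H : Type) [NormedAddCommGroup H] [InnerProductSpace ℂ H] :
    Setoid (sphere (0 : H) 1) where
  r φ ψ := ∃ c : ℂ, ‖c‖ = 1 ∧ (φ : H) = c • (ψ : H)
  iseqv := by
    constructor
    · intro φ; exact ⟨1, by simp⟩
    · rintro φ ψ ⟨c, hc, h⟩
      have hc0 : c ≠ 0 := by intro h0; simp [h0] at hc
      exact ⟨c⁻¹, by simp [hc], by rw [h, smul_smul, inv_mul_cancel₀ hc0, one_smul]⟩
    · rintro φ ψ ξ ⟨c, hc, h⟩ ⟨d, hd, h'⟩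
      exact ⟨c * d, by simp [hc, hd], by rw [h, h', smul_smul]⟩

/-- The set of rank-one orthogonal projections (pure states) on `H`. -/
abbrev PureState (H : Type) [NormedAddCommGroup H] [InnerProductSpace ℂ H] : Type :=
  {P : H →L[ℂ] H // ∃ φ : H, ‖φ‖ = 1 ∧ P = proj H φ}

/-- The transition probability `h_Q(P) = tr(PQ) = ⟪φ, P φ⟫` where `Q = |φ⟩⟨φ|`. -/
noncomputable def transProb (H : Type) [NormedAddCommGroup H] [InnerProductSpace ℂ H]
    (P Q : PureState H) : ℝ :=
  (⟪Q.2.choose, (P : H →L[ℂ] H) Q.2.choose⟫_ℂ).re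

/-- The weak topology `𝒯₀` on the pure states: the coarsest topology making every
transition-probability function `P ↦ h_Q(P) = tr(PQ)` continuous. -/
noncomputable def weakTop (H : Type) [NormedAddCommGroup H] [InnerProductSpace ℂ H] :
    TopologicalSpace (PureState H) :=
  ⨅ Q : PureState H, TopologicalSpace.induced (fun P => transProb H P Q) inferInstance

/-! Both topologies are controlled by the single quantity `1 - h_Q(P) = 1 - |⟪φ, ψ⟫|²`
(for `P = |φ⟩⟨φ|`, `Q = |ψ⟩⟨ψ|`). Each `h_Q` is norm-continuous, so `𝒯₀ ⊆ 𝒯_n`. Conversely,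
after rotating `ψ` by a phase so that `⟪φ, ψ⟫ = |⟪φ, ψ⟫|`, we get
`‖P - Q‖ ≤ 2 ‖φ - ψ‖` and `‖φ - ψ‖² = 2 - 2 |⟪φ, ψ⟫|`, hence `‖P - Q‖² ≤ 8 (1 - h_Q(P))`:
the norm ball around `Q` contains a sublevel set of `1 - h_Q`, which is `𝒯₀`-open. -/

open Topology

section

variable {H : Type} [NormedAddCommGroup H] [InnerProductSpace ℂ H]

lemma proj_apply (φ χ : H) : proj H φ χ = ⟪φ, χ⟫_ℂ • φ := rfl

lemma proj_smul_of_norm_eq_one {c : ℂ} (hc : ‖c‖ = 1) (ψ : H) :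
    proj H (c • ψ) = proj H ψ := by
  ext χ
  have hcc : c * (starRingEnd ℂ) c = 1 := by
    rw [Complex.mul_conj', hc]; norm_num
  simp only [proj_apply, inner_smul_left, smul_smul]
  congr 1
  linear_combination ⟪ψ, χ⟫_ℂ * hcc

lemma norm_proj_sub_proj_le (φ ψ : H) :
    ‖proj H φ - proj H ψ‖ ≤ (‖φ‖ + ‖ψ‖) * ‖φ - ψ‖ := by
  have hdecomp : proj H φ - proj H ψ =
      (innerSL ℂ (φ - ψ)).smulRight φ + (innerSL ℂ ψ).smulRight (φ - ψ) := by
    ext χ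
    simp only [proj, sub_apply, add_apply, ContinuousLinearMap.smulRight_apply, coe_innerSL_apply,
      map_sub]
    module
  calc ‖proj H φ - proj H ψ‖
      ≤ ‖φ - ψ‖ * ‖φ‖ + ‖ψ‖ * ‖φ - ψ‖ := by
        rw [hdecomp]
        refine (norm_add_le _ _).trans_eq ?_
        simp only [ContinuousLinearMap.norm_smulRight_apply, innerSL_apply_norm]
    _ = (‖φ‖ + ‖ψ‖) * ‖φ - ψ‖ := by ring

lemma sq_norm_proj_sub_proj_le {φ ψ : H} (hφ : ‖φ‖ = 1) (hψ : ‖ψ‖ = 1) :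
    ‖proj H φ - proj H ψ‖ ^ 2 ≤ 8 * (1 - ‖⟪φ, ψ⟫_ℂ‖ ^ 2) := by
  obtain ⟨c, hc, hcz⟩ := Complex.exists_norm_eq_mul_self ⟪φ, ψ⟫_ℂ
  set t := ‖⟪φ, ψ⟫_ℂ‖
  have ht1 : t ≤ 1 := by simpa [hφ, hψ] using norm_inner_le_norm (𝕜 := ℂ) φ ψ
  have hcψ : ‖c • ψ‖ = 1 := by rw [norm_smul, hc, hψ, one_mul]
  have hdist : ‖φ - c • ψ‖ ^ 2 = 2 - 2 * t := by
    rw [norm_sub_sq (𝕜 := ℂ), inner_smul_right, ← hcz, hφ, hcψ, RCLike.re_to_complex,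
      Complex.ofReal_re]
    ring
  have hproj : ‖proj H φ - proj H ψ‖ ≤ 2 * ‖φ - c • ψ‖ := by
    rw [← proj_smul_of_norm_eq_one hc ψ]
    refine (norm_proj_sub_proj_le φ (c • ψ)).trans_eq ?_
    rw [hφ, hcψ]; norm_num
  calc ‖proj H φ - proj H ψ‖ ^ 2 ≤ (2 * ‖φ - c • ψ‖) ^ 2 := by gcongr
    _ = 4 * (2 - 2 * t) := by rw [mul_pow, hdist]; norm_num
    _ ≤ 8 * (1 - t ^ 2) := by nlinarith [norm_nonneg ⟪φ, ψ⟫_ℂ]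

lemma transProb_eq_sq_norm_inner {P : PureState H} {φ : H} (hP : P.1 = proj H φ)
    (Q : PureState H) : transProb H P Q = ‖⟪φ, Q.2.choose⟫_ℂ‖ ^ 2 := by
  rw [transProb, hP, proj_apply, inner_smul_right, ← inner_conj_symm Q.2.choose φ,
    Complex.mul_conj, Complex.normSq_eq_norm_sq]
  exact Complex.ofReal_re _

lemma transProb_self (P : PureState H) : transProb H P P = 1 := by
  obtain ⟨hφ, hP⟩ := P.2.choose_spec
  rw [transProb_eq_sq_norm_inner hP, inner_self_eq_norm_sq_to_K, hφ]
  norm_num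

lemma dist_sq_le_transProb (P Q : PureState H) :
    dist P Q ^ 2 ≤ 8 * (1 - transProb H P Q) := by
  obtain ⟨φ, hφ, hP⟩ := P.2
  obtain ⟨hψ, hQ⟩ := Q.2.choose_spec
  have h := sq_norm_proj_sub_proj_le hφ hψ
  rwa [← hQ, ← hP, ← dist_eq_norm, ← Subtype.dist_eq, ← transProb_eq_sq_norm_inner hP] at h

lemma continuous_transProb_left (Q : PureState H) :
    Continuous fun P : PureState H => transProb H P Q :=
  Complex.continuous_re.comp <| continuous_const.inner <|
    (ContinuousLinearMap.apply ℂ H Q.2.choose).continuous.comp continuous_subtype_val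

lemma continuous_weakTop_transProb_left (Q : PureState H) :
    Continuous[weakTop H, _] fun P : PureState H => transProb H P Q :=
  continuous_iInf_dom continuous_induced_dom

end

theorem stmt15_general (H : Type) [NormedAddCommGroup H] [InnerProductSpace ℂ H] :
    weakTop H = (inferInstance : TopologicalSpace (PureState H)) := by
  refine le_antisymm (le_of_nhds_le_nhds fun Q => ?_)
    (le_iInf fun Q => continuous_iff_le_induced.mp (continuous_transProb_left Q))
  rw [Metric.nhds_basis_ball.ge_iff]
  intro ε hε
  have hnear : ∀ᶠ P in @nhds _ (weakTop H) Q, 1 - ε ^ 2 / 8 < transProb H P Q :=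
    (@Continuous.tendsto _ _ (weakTop H) _ _ (continuous_weakTop_transProb_left Q) Q).eventually
      (lt_mem_nhds (by rw [transProb_self]; linarith [sq_pos_of_pos hε]))
  filter_upwards [hnear] with P hP
  rw [mem_ball, ← sq_lt_sq₀ dist_nonneg hε.le]
  linarith [dist_sq_le_transProb P Q]

/-- On the set of rank-one projections, the weak topology `𝒯₀` generated by
the transition-probability functions coincides with the topology induced by the operator
norm. -/
theorem stmt15 (H : Type) [NormedAddCommGroup H] [InnerProductSpace ℂ H] [CompleteSpace H] :
    weakTop H = (inferInstance : TopologicalSpace (PureState H)) :=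
  stmt15_general H
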